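/- arXiv:2512.22719 — 2 statements merged into one kernel-verified Lean document; each statement's English description precedes it below -/
import Mathlib

section
/- Let ψ ∈ C²(ℝ) have compact support. Then η^ψ is continuously differentiable on (0, ∞) × ℝ in the variables (ρ, u), and there exists a constant C_ψ > 0, depending only on γ and ψ, such that for all ρ > 0 and u ∈ ℝ: |∂_ρη^ψ(ρ, u)| ≤ C_ψ(1 + ρ^θ) and |∂_uη^ψ(ρ, u)| ≤ C_ψ ρ. (In conserved variables (ρ, m), these say |η^ψ_ρ + u η^ψ_m| ≤ C_ψ(1 + ρ^θ) and |η^ψ_m| ≤ C_ψ.) -/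
/-!
Write `η^ψ(ρ, u) = ρ G(ρ^θ, u)` with `G(a, u) = ∫_{-1}^{1} ψ(u + a s) (1 - s²)^λ ds`
(`dilatedIntegral`).
Since `λ > -1` the weight is integrable, and `|∂(ψ(u + a s))| ≤ sup |ψ'| (1 + |s|)`, so
differentiation under the integral sign shows that `G` is `C¹` with `G` and `DG` bounded.
The chain rule then gives `∂_u η = ρ ∂_u G` and `∂_ρ η = G + θ ρ^θ ∂_a G`, the latter
because `ρ ∂_ρ(ρ^θ) = θ ρ^θ`.
-/

open Real MeasureTheory

/-- `θ = (γ − 1)/2`. -/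
noncomputable def thetaExp (γ : ℝ) : ℝ := (γ - 1) / 2

/-- `λ = (3 − γ)/(2(γ − 1))`. -/
noncomputable def lamExp (γ : ℝ) : ℝ := (3 - γ) / (2 * (γ - 1))

/-- The weak entropy of the isentropic Euler system with polytropic pressure, generated by `ψ`:
`η^ψ(ρ, u) = ρ ∫_{−1}^{1} ψ(u + ρ^θ s)(1 − s²)^λ ds`. -/
noncomputable def entropy (γ : ℝ) (ψ : ℝ → ℝ) (ρ u : ℝ) : ℝ :=
  ρ * ∫ s in (-1:ℝ)..1, ψ (u + ρ ^ thetaExp γ * s) * (1 - s ^ 2) ^ lamExp γ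

/-- The weak entropy flux generated by `ψ`:
`q^ψ(ρ, u) = ρ ∫_{−1}^{1} (u + θρ^θ s) ψ(u + ρ^θ s)(1 − s²)^λ ds`. -/
noncomputable def entropyFlux (γ : ℝ) (ψ : ℝ → ℝ) (ρ u : ℝ) : ℝ :=
  ρ * ∫ s in (-1:ℝ)..1,
    (u + thetaExp γ * ρ ^ thetaExp γ * s) * ψ (u + ρ ^ thetaExp γ * s) * (1 - s ^ 2) ^ lamExp γ

lemma intervalIntegrable_one_sub_sq_rpow {l : ℝ} (hl : -1 < l) :
    IntervalIntegrable (fun s : ℝ => (1 - s ^ 2) ^ l) volume (-1) 1 := by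
  rcases le_or_gt 0 l with hl₀ | hl₀
  · exact ((continuous_rpow_const hl₀).comp (by fun_prop)).intervalIntegrable _ _
  have hsub : IntervalIntegrable (fun s : ℝ => (1 - s) ^ l) volume (-1) 1 := by
    have := (intervalIntegral.intervalIntegrable_rpow' hl (a := 2) (b := 0)).comp_sub_left 1
    norm_num at this
    exact this
  have hadd : IntervalIntegrable (fun s : ℝ => (1 + s) ^ l) volume (-1) 1 := by
    have := (intervalIntegral.intervalIntegrable_rpow' hl (a := 0) (b := 2)).comp_add_left 1
    norm_num at this
    exact this
  -- `1 - s² ≥ 1 ∓ s` for `±s ≥ 0`, and `x ↦ x ^ l` is antitone on `(0, ∞)`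
  refine (hsub.add hadd).mono_fun (Measurable.aestronglyMeasurable (by fun_prop)) ?_
  rw [Set.uIoc_of_le (by norm_num)]
  filter_upwards [ae_restrict_mem measurableSet_Ioc] with s ⟨hs₁, hs₂⟩
  have hsub₀ : 0 ≤ (1 - s) ^ l := rpow_nonneg (by linarith) l
  have hadd₀ : 0 ≤ (1 + s) ^ l := rpow_nonneg (by linarith) l
  rw [norm_of_nonneg (rpow_nonneg (by nlinarith) _), norm_of_nonneg (add_nonneg hsub₀ hadd₀)]
  rcases eq_or_lt_of_le hs₂ with rfl | hs₂
  · simp [zero_rpow hl₀.ne, hadd₀]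
  rcases le_total 0 s with hs | hs
  · linarith [rpow_le_rpow_of_nonpos (x := 1 - s) (y := 1 - s ^ 2)
      (by linarith) (by nlinarith) hl₀.le]
  · linarith [rpow_le_rpow_of_nonpos (x := 1 + s) (y := 1 - s ^ 2)
      (by linarith) (by nlinarith) hl₀.le]

section DilatedIntegral

open ContinuousLinearMap

variable {μ : Measure ℝ} {f w : ℝ → ℝ} {M₀ M₁ : ℝ}

noncomputable def dilatedIntegral (f w : ℝ → ℝ) (μ : Measure ℝ) (p : ℝ × ℝ) : ℝ :=
  ∫ s, f (p.2 + p.1 * s) * w s ∂μ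

noncomputable def dilatedIntegralFDeriv (f w : ℝ → ℝ) (μ : Measure ℝ) (p : ℝ × ℝ) :
    ℝ × ℝ →L[ℝ] ℝ :=
  ∫ s, (deriv f (p.2 + p.1 * s) * w s) • (s • fst ℝ ℝ ℝ + snd ℝ ℝ ℝ) ∂μ

lemma norm_smul_fst_add_snd_le (s : ℝ) : ‖s • fst ℝ ℝ ℝ + snd ℝ ℝ ℝ‖ ≤ |s| + 1 :=
  calc ‖s • fst ℝ ℝ ℝ + snd ℝ ℝ ℝ‖ ≤ ‖s‖ * ‖fst ℝ ℝ ℝ‖ + ‖snd ℝ ℝ ℝ‖ := by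
        grw [norm_add_le, norm_smul]
    _ ≤ |s| * 1 + 1 := by
        rw [Real.norm_eq_abs]
        gcongr
        exacts [ContinuousLinearMap.norm_fst_le .., ContinuousLinearMap.norm_snd_le ..]
    _ = |s| + 1 := by ring

lemma aestronglyMeasurable_comp_dilate_mul (hf : Continuous f) (hw : AEStronglyMeasurable w μ)
    (p : ℝ × ℝ) : AEStronglyMeasurable (fun s => f (p.2 + p.1 * s) * w s) μ :=
  (hf.comp (by fun_prop)).aestronglyMeasurable.mul hw

lemma norm_dilatedIntegrand_fderiv_le (hf₁ : ∀ x, ‖deriv f x‖ ≤ M₁) (p : ℝ × ℝ) (s : ℝ) :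
    ‖(deriv f (p.2 + p.1 * s) * w s) • (s • fst ℝ ℝ ℝ + snd ℝ ℝ ℝ)‖ ≤
      M₁ * (‖s * w s‖ + ‖w s‖) :=
  calc _ ≤ ‖deriv f (p.2 + p.1 * s)‖ * (‖w s‖ * (|s| + 1)) := by
        rw [norm_smul, norm_mul, mul_assoc]
        gcongr
        exact norm_smul_fst_add_snd_le s
    _ ≤ M₁ * (‖w s‖ * (|s| + 1)) := by gcongr; exact hf₁ _
    _ = M₁ * (‖s * w s‖ + ‖w s‖) := by rw [norm_mul, Real.norm_eq_abs s]; ring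

lemma hasFDerivAt_dilate (s : ℝ) (p : ℝ × ℝ) :
    HasFDerivAt (fun q : ℝ × ℝ => q.2 + q.1 * s) (s • fst ℝ ℝ ℝ + snd ℝ ℝ ℝ) p := by
  rw [add_comm (s • _)]
  exact hasFDerivAt_snd.add (by simpa [smul_eq_mul, mul_comm] using hasFDerivAt_fst.mul_const s)

lemma norm_dilatedIntegral_le (hw : Integrable w μ) (hf₀ : ∀ x, ‖f x‖ ≤ M₀) (p : ℝ × ℝ) :
    ‖dilatedIntegral f w μ p‖ ≤ M₀ * ∫ s, ‖w s‖ ∂μ := by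
  rw [← integral_const_mul]
  refine norm_integral_le_of_norm_le (hw.norm.const_mul M₀) (.of_forall fun s => ?_)
  rw [norm_mul]
  gcongr
  exact hf₀ _

lemma aestronglyMeasurable_dilatedIntegrand_fderiv (hf : ContDiff ℝ 1 f) (hw : Integrable w μ)
    (p : ℝ × ℝ) :
    AEStronglyMeasurable
      (fun s => (deriv f (p.2 + p.1 * s) * w s) • (s • fst ℝ ℝ ℝ + snd ℝ ℝ ℝ)) μ :=
  (aestronglyMeasurable_comp_dilate_mul (hf.continuous_deriv le_rfl) hw.aestronglyMeasurable
    p).smul (by fun_prop : Continuous fun s : ℝ => s • fst ℝ ℝ ℝ + snd ℝ ℝ ℝ).aestronglyMeasurable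

lemma hasFDerivAt_dilatedIntegral (hf : ContDiff ℝ 1 f) (hw : Integrable w μ)
    (hsw : Integrable (fun s => s * w s) μ) (hf₀ : ∀ x, ‖f x‖ ≤ M₀)
    (hf₁ : ∀ x, ‖deriv f x‖ ≤ M₁) (p : ℝ × ℝ) :
    HasFDerivAt (dilatedIntegral f w μ) (dilatedIntegralFDeriv f w μ p) p := by
  refine hasFDerivAt_integral_of_dominated_of_fderiv_le Filter.univ_mem
    (.of_forall (aestronglyMeasurable_comp_dilate_mul hf.continuous hw.aestronglyMeasurable))
    (hw.bdd_mul (hf.continuous.comp (by fun_prop)).aestronglyMeasurable (.of_forall fun _ => hf₀ _))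
    (aestronglyMeasurable_dilatedIntegrand_fderiv hf hw p)
    (.of_forall fun s q _ => norm_dilatedIntegrand_fderiv_le (w := w) hf₁ q s)
    ((hsw.norm.fun_add hw.norm).const_mul M₁) (.of_forall fun s q _ => ?_)
  have := ((hf.differentiable one_ne_zero _).hasDerivAt.comp_hasFDerivAt q
    (hasFDerivAt_dilate s q)).mul_const (w s)
  rwa [smul_smul, mul_comm] at this

lemma continuous_dilatedIntegralFDeriv (hf : ContDiff ℝ 1 f) (hw : Integrable w μ)
    (hsw : Integrable (fun s => s * w s) μ) (hf₁ : ∀ x, ‖deriv f x‖ ≤ M₁) :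
    Continuous (dilatedIntegralFDeriv f w μ) :=
  continuous_of_dominated (aestronglyMeasurable_dilatedIntegrand_fderiv hf hw)
    (fun p => .of_forall (norm_dilatedIntegrand_fderiv_le hf₁ p))
    ((hsw.norm.fun_add hw.norm).const_mul M₁)
    (.of_forall fun s => by have := hf.continuous_deriv le_rfl; fun_prop)

lemma norm_dilatedIntegralFDeriv_le (hw : Integrable w μ) (hsw : Integrable (fun s => s * w s) μ)
    (hf₁ : ∀ x, ‖deriv f x‖ ≤ M₁) (p : ℝ × ℝ) :
    ‖dilatedIntegralFDeriv f w μ p‖ ≤ M₁ * ∫ s, ‖s * w s‖ + ‖w s‖ ∂μ := by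
  rw [← integral_const_mul]
  exact norm_integral_le_of_norm_le ((hsw.norm.fun_add hw.norm).const_mul M₁)
    (.of_forall (norm_dilatedIntegrand_fderiv_le hf₁ p))

lemma contDiff_dilatedIntegral (hf : ContDiff ℝ 1 f) (hw : Integrable w μ)
    (hsw : Integrable (fun s => s * w s) μ) (hf₀ : ∀ x, ‖f x‖ ≤ M₀)
    (hf₁ : ∀ x, ‖deriv f x‖ ≤ M₁) : ContDiff ℝ 1 (dilatedIntegral f w μ) := by
  have hD := hasFDerivAt_dilatedIntegral hf hw hsw hf₀ hf₁
  rw [contDiff_one_iff_fderiv, funext fun p => (hD p).fderiv]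
  exact ⟨fun p => (hD p).differentiableAt, continuous_dilatedIntegralFDeriv hf hw hsw hf₁⟩

end DilatedIntegral

section RpowScaling

variable {D : ℝ × ℝ → ℝ} {D' : ℝ × ℝ → ℝ × ℝ →L[ℝ] ℝ} {θ A B : ℝ}

lemma contDiffOn_mul_comp_rpow (hD : ContDiff ℝ 1 D) :
    ContDiffOn ℝ 1 (fun p : ℝ × ℝ => p.1 * D (p.1 ^ θ, p.2)) {p | 0 < p.1} := by
  intro p hp
  have hpow : ContDiffAt ℝ 1 (fun q : ℝ × ℝ => q.1 ^ θ) p :=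
    (contDiffAt_rpow_const_of_ne (ne_of_gt hp)).comp p contDiffAt_fst
  exact (contDiffAt_fst.mul (hD.contDiffAt.comp p (hpow.prodMk contDiffAt_snd))).contDiffWithinAt

lemma abs_deriv_mul_comp_rpow_fst_le (hD : ∀ p, HasFDerivAt D (D' p) p) (hA : ∀ p, ‖D p‖ ≤ A)
    (hB : ∀ p, ‖D' p‖ ≤ B) {ρ : ℝ} (hρ : 0 < ρ) (u : ℝ) :
    |deriv (fun r => r * D (r ^ θ, u)) ρ| ≤ A + |θ| * B * ρ ^ θ := by
  have hpow : HasDerivAt (fun r : ℝ => (r ^ θ, u)) (θ * ρ ^ (θ - 1), 0) ρ :=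
    (hasDerivAt_rpow_const (Or.inl hρ.ne')).prodMk (hasDerivAt_const ρ u)
  have hderiv : HasDerivAt (fun r => r * D (r ^ θ, u))
      (1 * D (ρ ^ θ, u) + ρ * D' (ρ ^ θ, u) (θ * ρ ^ (θ - 1), 0)) ρ :=
    (hasDerivAt_id' ρ).mul ((hD _).comp_hasDerivAt ρ hpow)
  rw [hderiv.deriv]
  have hD'_le : ‖D' (ρ ^ θ, u) (θ * ρ ^ (θ - 1), 0)‖ ≤ B * (|θ| * ρ ^ (θ - 1)) := by
    grw [ContinuousLinearMap.le_opNorm, hB, Prod.norm_mk, norm_zero, norm_mul,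
      norm_of_nonneg (rpow_nonneg hρ.le _), max_eq_left (by positivity), Real.norm_eq_abs]
  have hρθ : ρ * ρ ^ (θ - 1) = ρ ^ θ := by
    rw [mul_comm, ← rpow_add_one hρ.ne', sub_add_cancel]
  calc |1 * D (ρ ^ θ, u) + ρ * D' (ρ ^ θ, u) (θ * ρ ^ (θ - 1), 0)|
      ≤ ‖D (ρ ^ θ, u)‖ + ρ * ‖D' (ρ ^ θ, u) (θ * ρ ^ (θ - 1), 0)‖ := by
        grw [abs_add_le, one_mul, abs_mul, abs_of_pos hρ]; rfl
    _ ≤ A + ρ * (B * (|θ| * ρ ^ (θ - 1))) := by grw [hA, hD'_le]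
    _ = A + |θ| * B * ρ ^ θ := by rw [← hρθ]; ring

lemma abs_deriv_mul_comp_rpow_snd_le (hD : ∀ p, HasFDerivAt D (D' p) p)
    (hB : ∀ p, ‖D' p‖ ≤ B) (ρ u : ℝ) :
    |deriv (fun v => ρ * D (ρ ^ θ, v)) u| ≤ B * |ρ| := by
  have hshift : HasDerivAt (fun v : ℝ => (ρ ^ θ, v)) (0, 1) u :=
    (hasDerivAt_const u _).prodMk (hasDerivAt_id u)
  have hderiv : HasDerivAt (fun v => ρ * D (ρ ^ θ, v)) (ρ * D' (ρ ^ θ, u) (0, 1)) u :=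
    ((hD _).comp_hasDerivAt u hshift).const_mul ρ
  rw [hderiv.deriv, abs_mul, mul_comm]
  gcongr
  grw [← Real.norm_eq_abs, ContinuousLinearMap.le_opNorm, hB]
  simp

lemma exists_deriv_bounds_mul_comp_rpow (hD : ∀ p, HasFDerivAt D (D' p) p)
    (hA : ∀ p, ‖D p‖ ≤ A) (hB : ∀ p, ‖D' p‖ ≤ B) :
    ∃ C : ℝ, 0 < C ∧ ∀ ρ : ℝ, 0 < ρ → ∀ u : ℝ,
      |deriv (fun r => r * D (r ^ θ, u)) ρ| ≤ C * (1 + ρ ^ θ) ∧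
      |deriv (fun v => ρ * D (ρ ^ θ, v)) u| ≤ C * ρ := by
  refine ⟨|A| + (|θ| + 1) * |B| + 1, by positivity, fun ρ hρ u => ⟨?_, ?_⟩⟩
  · grw [abs_deriv_mul_comp_rpow_fst_le hD hA hB hρ u]
    have := rpow_nonneg hρ.le θ
    nlinarith [le_abs_self A, le_abs_self B, abs_nonneg θ, abs_nonneg B, abs_nonneg A,
      mul_nonneg (abs_nonneg θ) this]
  · grw [abs_deriv_mul_comp_rpow_snd_le hD hB, abs_of_pos hρ]
    gcongr
    nlinarith [le_abs_self B, abs_nonneg θ, abs_nonneg B, abs_nonneg A]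

end RpowScaling

lemma neg_one_lt_lamExp {γ : ℝ} (hγ : 1 < γ) : -1 < lamExp γ := by
  rw [lamExp, lt_div_iff₀ (by linarith)]
  nlinarith

lemma entropy_eq_mul_dilatedIntegral (γ : ℝ) (ψ : ℝ → ℝ) (ρ u : ℝ) :
    entropy γ ψ ρ u = ρ * dilatedIntegral ψ (fun s => (1 - s ^ 2) ^ lamExp γ)
      (volume.restrict (Set.Ioc (-1) 1)) (ρ ^ thetaExp γ, u) := by
  rw [entropy, intervalIntegral.integral_of_le (by norm_num)]
  rfl

/-- For `ψ ∈ C²(ℝ)` with compact support, `η^ψ` is `C¹` on `(0,∞) × ℝ` in `(ρ, u)` and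
`|∂_ρ η^ψ(ρ,u)| ≤ C_ψ(1 + ρ^θ)`, `|∂_u η^ψ(ρ,u)| ≤ C_ψ ρ`. -/
theorem entropy_compactSupport_deriv_bounds (γ : ℝ) (hγ : 1 < γ)
    (ψ : ℝ → ℝ) (hψ : ContDiff ℝ 2 ψ) (hsupp : HasCompactSupport ψ) :
    ContDiffOn ℝ 1 (fun p : ℝ × ℝ => entropy γ ψ p.1 p.2) {p : ℝ × ℝ | 0 < p.1} ∧
    ∃ C : ℝ, 0 < C ∧ ∀ ρ : ℝ, 0 < ρ → ∀ u : ℝ,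
      |deriv (fun r => entropy γ ψ r u) ρ| ≤ C * (1 + ρ ^ thetaExp γ) ∧
      |deriv (fun v => entropy γ ψ ρ v) u| ≤ C * ρ := by
  have hψ₁ : ContDiff ℝ 1 ψ := hψ.of_le one_le_two
  obtain ⟨M₀, hM₀⟩ := hsupp.exists_bound_of_continuous hψ.continuous
  obtain ⟨M₁, hM₁⟩ := hsupp.deriv.exists_bound_of_continuous (hψ.continuous_deriv one_le_two)
  have hw := intervalIntegrable_one_sub_sq_rpow (neg_one_lt_lamExp hγ)
  have hsw := hw.continuousOn_mul continuousOn_id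
  rw [intervalIntegrable_iff_integrableOn_Ioc_of_le (by norm_num)] at hw hsw
  simp only [entropy_eq_mul_dilatedIntegral]
  exact ⟨contDiffOn_mul_comp_rpow (contDiff_dilatedIntegral hψ₁ hw hsw hM₀ hM₁),
    exists_deriv_bounds_mul_comp_rpow (hasFDerivAt_dilatedIntegral hψ₁ hw hsw hM₀ hM₁)
      (norm_dilatedIntegral_le hw hM₀) (norm_dilatedIntegralFDeriv_le hw hsw hM₁)⟩
end

section
/- Assume 1 < γ ≤ 3. Let ψ ∈ C²(ℝ) be convex and satisfy, for some A > 0 and some δ with 0 ≤ δ ≤ 2, |ψ(s)| ≤ A|s|^{3−δ} and |ψ′(s)| ≤ A|s|^{2−δ} for all s ∈ ℝ. Then there exists a constant C > 0, depending only on γ, A and δ, such that for all ρ > 0 and u ∈ ℝ: |η^ψ(ρ, u)| + |q^ψ(ρ, u)| + (1/ρ)|∂_uη^ψ(ρ, u)|² ≤ C(1 + ρ|u|⁴ + g(ρ) + ρP(ρ)). -/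
open Real MeasureTheory

/-- `κ = (γ − 1)²/(4γ)`. -/
noncomputable def kappaCoeff (γ : ℝ) : ℝ := (γ - 1) ^ 2 / (4 * γ)

/-- The polytropic pressure `P(ρ) = κρ^γ`. -/
noncomputable def pressure (γ ρ : ℝ) : ℝ := kappaCoeff γ * ρ ^ γ

/-- `g(ρ) = (κ²γ/((γ−1)²(2γ−1))) ρ^{2γ−1}`, the unique function with `g(0) = g′(0) = 0` and
`g″(ρ) = 2P′(ρ)e(ρ)/ρ`. -/
noncomputable def gFun (γ ρ : ℝ) : ℝ :=
  kappaCoeff γ ^ 2 * γ / ((γ - 1) ^ 2 * (2 * γ - 1)) * ρ ^ (2 * γ - 1)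

/-!
On the integration range `|s| ≤ 1` the argument `u + ρ^θ s` has modulus at most `|u| + ρ^θ`, and
for `γ ≤ 3` the weight `(1 - s²)^λ` lies in `[0, 1]`. Hence `η`, `q` and `∂ᵤη` (differentiate under
the integral sign) are bounded by `ρ` times `A (1 + |u| + ρ^θ)^k` with `k = 3, 4, 2`, and all three
terms of the left side are `O(ρ (1 + |u| + ρ^θ)⁴)`. Finally
`ρ (1 + |u| + ρ^θ)⁴ ≤ 27 (ρ + ρ|u|⁴ + ρ^{1+4θ})` with `ρ^{1+4θ} = ρ^{2γ-1}`, a multiple of `g(ρ)`.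
-/

open Set

theorem hasDerivAt_intervalIntegral_of_continuous {F F' : ℝ → ℝ → ℝ} {a b x₀ : ℝ}
    (hF : Continuous (Function.uncurry F)) (hF' : Continuous (Function.uncurry F'))
    (hderiv : ∀ x t, HasDerivAt (F · t) (F' x t) x) :
    HasDerivAt (fun x => ∫ t in a..b, F x t) (∫ t in a..b, F' x₀ t) x₀ := by
  obtain ⟨K, hK⟩ := (isCompact_closedBall x₀ 1 |>.prod isCompact_uIcc).exists_bound_of_continuousOn
    hF'.continuousOn
  have hFx : ∀ x, Continuous (F x) := fun x => hF.comp (Continuous.prodMk_right x)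
  refine (intervalIntegral.hasDerivAt_integral_of_dominated_loc_of_deriv_le (bound := fun _ => K)
    (Metric.ball_mem_nhds x₀ one_pos)
    (Filter.Eventually.of_forall fun x => (hFx x).aestronglyMeasurable)
    ((hFx x₀).intervalIntegrable _ _)
    (hF'.comp (Continuous.prodMk_right x₀)).aestronglyMeasurable
    (Filter.Eventually.of_forall fun t ht x hx =>
      hK (x, t) ⟨Metric.ball_subset_closedBall hx, uIoc_subset_uIcc ht⟩)
    intervalIntegrable_const
    (Filter.Eventually.of_forall fun t _ x _ => hderiv x t)).2

theorem abs_le_mul_one_add_pow_of_abs_le {f : ℝ → ℝ} {A p : ℝ} {n : ℕ} {x R : ℝ}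
    (hf : ∀ s, |f s| ≤ A * |s| ^ p) (hA : 0 ≤ A) (hp : 0 ≤ p) (hpn : p ≤ n) (hx : |x| ≤ R) :
    |f x| ≤ A * (1 + R) ^ n := by
  have hR : 0 ≤ R := (abs_nonneg x).trans hx
  calc |f x| ≤ A * |x| ^ p := hf x
    _ ≤ A * (1 + R) ^ p := by gcongr; linarith
    _ ≤ A * (1 + R) ^ (n : ℝ) := by gcongr; linarith
    _ = A * (1 + R) ^ n := by rw [Real.rpow_natCast]

theorem abs_add_mul_le_of_abs_le_one {u a s : ℝ} (ha : 0 ≤ a) (hs : |s| ≤ 1) :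
    |u + a * s| ≤ |u| + a := by
  have := abs_add_le u (a * s)
  rw [abs_mul, abs_of_nonneg ha] at this
  nlinarith

theorem abs_integral_mul_one_sub_sq_rpow_le {F : ℝ → ℝ} {l K : ℝ} (hl : 0 ≤ l)
    (hF : ∀ s, |s| ≤ 1 → |F s| ≤ K) :
    |∫ s in (-1 : ℝ)..1, F s * (1 - s ^ 2) ^ l| ≤ 2 * K := by
  have hbound : ∀ s ∈ uIoc (-1 : ℝ) 1, ‖F s * (1 - s ^ 2) ^ l‖ ≤ K := by
    intro s hs
    rw [uIoc_of_le (by norm_num)] at hs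
    have hs1 : |s| ≤ 1 := abs_le.2 ⟨hs.1.le, hs.2⟩
    have hw0 : 0 ≤ 1 - s ^ 2 := by nlinarith [sq_abs s, abs_nonneg s]
    have hw1 : (1 - s ^ 2) ^ l ≤ 1 := rpow_le_one hw0 (by nlinarith) hl
    rw [Real.norm_eq_abs, abs_mul, abs_of_nonneg (rpow_nonneg hw0 l)]
    nlinarith [abs_nonneg (F s), hF s hs1]
  simpa [Real.norm_eq_abs, mul_comm, one_add_one_eq_two] using
    intervalIntegral.norm_integral_le_of_norm_le_const hbound

section Exponents

variable {γ : ℝ}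

theorem thetaExp_pos (hγ : 1 < γ) : 0 < thetaExp γ := by unfold thetaExp; linarith

theorem thetaExp_le_one (hγ3 : γ ≤ 3) : thetaExp γ ≤ 1 := by unfold thetaExp; linarith

theorem lamExp_nonneg (hγ : 1 < γ) (hγ3 : γ ≤ 3) : 0 ≤ lamExp γ :=
  div_nonneg (by linarith) (by linarith)

theorem kappaCoeff_pos (hγ : 1 < γ) : 0 < kappaCoeff γ :=
  div_pos (pow_pos (by linarith) 2) (by linarith)

end Exponents

section Entropy

variable {γ : ℝ} {ψ : ℝ → ℝ} {ρ u K : ℝ}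

theorem abs_entropy_le (hγ : 1 < γ) (hγ3 : γ ≤ 3) (hρ : 0 ≤ ρ)
    (hψ : ∀ s, |s| ≤ 1 → |ψ (u + ρ ^ thetaExp γ * s)| ≤ K) :
    |entropy γ ψ ρ u| ≤ ρ * (2 * K) := by
  rw [entropy, abs_mul, abs_of_nonneg hρ]
  exact mul_le_mul_of_nonneg_left
    (abs_integral_mul_one_sub_sq_rpow_le (lamExp_nonneg hγ hγ3) hψ) hρ

theorem abs_entropyFlux_le (hγ : 1 < γ) (hγ3 : γ ≤ 3) (hρ : 0 ≤ ρ)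
    (hψ : ∀ s, |s| ≤ 1 → |ψ (u + ρ ^ thetaExp γ * s)| ≤ K) :
    |entropyFlux γ ψ ρ u| ≤ ρ * (2 * ((|u| + ρ ^ thetaExp γ) * K)) := by
  have ha : 0 ≤ ρ ^ thetaExp γ := rpow_nonneg hρ _
  have hθa : thetaExp γ * ρ ^ thetaExp γ ≤ ρ ^ thetaExp γ :=
    mul_le_of_le_one_left ha (thetaExp_le_one hγ3)
  rw [entropyFlux, abs_mul, abs_of_nonneg hρ]
  refine mul_le_mul_of_nonneg_left
    (abs_integral_mul_one_sub_sq_rpow_le (lamExp_nonneg hγ hγ3) fun s hs => ?_) hρ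
  have hspeed := abs_add_mul_le_of_abs_le_one (u := u)
    (mul_nonneg (thetaExp_pos hγ).le ha) hs
  rw [abs_mul]
  exact mul_le_mul (by linarith) (hψ s hs) (abs_nonneg _) (by positivity)

theorem hasDerivAt_entropy (hγ : 1 < γ) (hγ3 : γ ≤ 3) (hψ : ContDiff ℝ 1 ψ) (ρ u : ℝ) :
    HasDerivAt (entropy γ ψ ρ)
      (ρ * ∫ s in (-1 : ℝ)..1, deriv ψ (u + ρ ^ thetaExp γ * s) * (1 - s ^ 2) ^ lamExp γ) u := by
  have hl := lamExp_nonneg hγ hγ3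
  have hψc := hψ.continuous
  have hψ'c := hψ.continuous_deriv le_rfl
  refine (hasDerivAt_intervalIntegral_of_continuous
    (F := fun x s => ψ (x + ρ ^ thetaExp γ * s) * (1 - s ^ 2) ^ lamExp γ)
    (F' := fun x s => deriv ψ (x + ρ ^ thetaExp γ * s) * (1 - s ^ 2) ^ lamExp γ)
    (by simp only [Function.uncurry_def]; fun_prop (disch := exact hl))
    (by simp only [Function.uncurry_def]; fun_prop (disch := exact hl))
    fun x t => ?_).const_mul ρ
  simpa using (((hψ.differentiable one_ne_zero).differentiableAt.hasDerivAt).comp x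
    ((hasDerivAt_id x).add_const (ρ ^ thetaExp γ * t))).mul_const ((1 - t ^ 2) ^ lamExp γ)

theorem abs_deriv_entropy_le (hγ : 1 < γ) (hγ3 : γ ≤ 3) (hψ : ContDiff ℝ 1 ψ) (hρ : 0 ≤ ρ)
    (hψ' : ∀ s, |s| ≤ 1 → |deriv ψ (u + ρ ^ thetaExp γ * s)| ≤ K) :
    |deriv (entropy γ ψ ρ) u| ≤ ρ * (2 * K) := by
  rw [(hasDerivAt_entropy hγ hγ3 hψ ρ u).deriv, abs_mul, abs_of_nonneg hρ]
  exact mul_le_mul_of_nonneg_left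
    (abs_integral_mul_one_sub_sq_rpow_le (lamExp_nonneg hγ hγ3) hψ') hρ

end Entropy

theorem one_add_add_pow_four_le {x y : ℝ} (hx : 0 ≤ x) (hy : 0 ≤ y) :
    (1 + x + y) ^ 4 ≤ 27 * (1 + x ^ 4 + y ^ 4) := by
  have hsq : (1 + x + y) ^ 2 ≤ 3 * (1 + x ^ 2 + y ^ 2) := by
    nlinarith [sq_nonneg (1 - x), sq_nonneg (x - y), sq_nonneg (1 - y)]
  calc (1 + x + y) ^ 4 = ((1 + x + y) ^ 2) ^ 2 := by ring
    _ ≤ (3 * (1 + x ^ 2 + y ^ 2)) ^ 2 := by gcongr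
    _ ≤ 27 * (1 + x ^ 4 + y ^ 4) := by
      nlinarith [sq_nonneg (1 - x ^ 2), sq_nonneg (x ^ 2 - y ^ 2), sq_nonneg (1 - y ^ 2)]

theorem mul_rpow_thetaExp_pow_four {γ ρ : ℝ} (hρ : 0 < ρ) :
    ρ * (ρ ^ thetaExp γ) ^ 4 = ρ ^ (2 * γ - 1) := by
  rw [← rpow_mul_natCast hρ.le, show 2 * γ - 1 = 1 + thetaExp γ * (4 : ℕ) by
    unfold thetaExp; push_cast; ring, rpow_add hρ, rpow_one]

theorem le_one_add_rpow {ρ p : ℝ} (hρ : 0 ≤ ρ) (hp : 1 ≤ p) : ρ ≤ 1 + ρ ^ p := by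
  rcases le_total ρ 1 with h | h
  · linarith [rpow_nonneg hρ p]
  · linarith [self_le_rpow_of_one_le h hp]

theorem exists_mul_pow_four_le_energy {γ : ℝ} (hγ : 1 < γ) :
    ∃ C > 0, ∀ ρ > 0, ∀ u : ℝ, ρ * (1 + |u| + ρ ^ thetaExp γ) ^ 4 ≤
      C * (1 + ρ * |u| ^ 4 + gFun γ ρ + ρ * pressure γ ρ) := by
  set c := kappaCoeff γ ^ 2 * γ / ((γ - 1) ^ 2 * (2 * γ - 1))
  have hγ1 : 0 < γ - 1 := by linarith
  have hc : 0 < c :=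
    div_pos (mul_pos (pow_pos (kappaCoeff_pos hγ) 2) (by linarith)) (by nlinarith)
  refine ⟨27 * (1 + 2 / c), by positivity, fun ρ hρ u => ?_⟩
  have hg : gFun γ ρ = c * ρ ^ (2 * γ - 1) := rfl
  have hR : 0 ≤ ρ ^ (2 * γ - 1) := rpow_nonneg hρ.le _
  have hP : 0 ≤ ρ * pressure γ ρ :=
    mul_nonneg hρ.le (mul_nonneg (kappaCoeff_pos hγ).le (rpow_nonneg hρ.le γ))
  have hρR := le_one_add_rpow (p := 2 * γ - 1) hρ.le (by linarith)
  calc ρ * (1 + |u| + ρ ^ thetaExp γ) ^ 4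
      ≤ ρ * (27 * (1 + |u| ^ 4 + (ρ ^ thetaExp γ) ^ 4)) := by
        gcongr; exact one_add_add_pow_four_le (abs_nonneg u) (rpow_nonneg hρ.le _)
    _ = 27 * (ρ + ρ * |u| ^ 4 + ρ ^ (2 * γ - 1)) := by
        rw [← mul_rpow_thetaExp_pow_four hρ]; ring
    _ ≤ 27 * (1 + 2 / c) * (1 + ρ * |u| ^ 4 + gFun γ ρ + ρ * pressure γ ρ) := by
        rw [hg, mul_assoc]
        gcongr
        have : 2 / c * (c * ρ ^ (2 * γ - 1)) = 2 * ρ ^ (2 * γ - 1) := by field_simp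
        have hX : 0 ≤ ρ * |u| ^ 4 := by positivity
        have h2c : 0 ≤ 2 / c := by positivity
        nlinarith [mul_nonneg h2c hX, mul_nonneg h2c hP, mul_nonneg hc.le hR]

theorem entropy_subcubic_growth_bounds_general (γ : ℝ) (hγ : 1 < γ) (hγ3 : γ ≤ 3)
    (ψ : ℝ → ℝ) (hψ : ContDiff ℝ 2 ψ)
    (A δ : ℝ) (hA : 0 < A) (hδ0 : 0 ≤ δ) (hδ2 : δ ≤ 2)
    (hψ_bound : ∀ s : ℝ, |ψ s| ≤ A * |s| ^ (3 - δ))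
    (hψ'_bound : ∀ s : ℝ, |deriv ψ s| ≤ A * |s| ^ (2 - δ)) :
    ∃ C : ℝ, 0 < C ∧ ∀ ρ : ℝ, 0 < ρ → ∀ u : ℝ,
      |entropy γ ψ ρ u| + |entropyFlux γ ψ ρ u| +
          (1 / ρ) * |deriv (fun v => entropy γ ψ ρ v) u| ^ 2 ≤
        C * (1 + ρ * |u| ^ 4 + gFun γ ρ + ρ * pressure γ ρ) := by
  obtain ⟨C₀, hC₀, hdom⟩ := exists_mul_pow_four_le_energy hγ
  refine ⟨(4 * A + 4 * A ^ 2) * C₀, by positivity, fun ρ hρ u => ?_⟩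
  set a := ρ ^ thetaExp γ
  set M := 1 + |u| + a
  have ha : 0 ≤ a := rpow_nonneg hρ.le _
  have hM : 1 ≤ M := by linarith [abs_nonneg u]
  have hgrowth {f : ℝ → ℝ} {p : ℝ} {n : ℕ} (hf : ∀ s, |f s| ≤ A * |s| ^ p) (hp : 0 ≤ p)
      (hpn : p ≤ n) (s : ℝ) (hs : |s| ≤ 1) : |f (u + a * s)| ≤ A * M ^ n := by
    have := abs_le_mul_one_add_pow_of_abs_le hf hA.le hp hpn
      (abs_add_mul_le_of_abs_le_one (u := u) ha hs)
    rwa [← add_assoc] at this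
  have hψM := hgrowth (n := 3) hψ_bound (by linarith) (by push_cast; linarith)
  have hη : |entropy γ ψ ρ u| ≤ 2 * A * (ρ * M ^ 4) := by
    calc _ ≤ ρ * (2 * (A * M ^ 3)) := abs_entropy_le hγ hγ3 hρ.le hψM
      _ = 2 * A * (ρ * M ^ 3) := by ring
      _ ≤ 2 * A * (ρ * M ^ 4) := by gcongr; norm_num
  have hq : |entropyFlux γ ψ ρ u| ≤ 2 * A * (ρ * M ^ 4) := by
    calc _ ≤ ρ * (2 * ((|u| + a) * (A * M ^ 3))) := abs_entropyFlux_le hγ hγ3 hρ.le hψM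
      _ ≤ ρ * (2 * (M * (A * M ^ 3))) := by gcongr; linarith
      _ = 2 * A * (ρ * M ^ 4) := by ring
  have hD : 1 / ρ * |deriv (fun v => entropy γ ψ ρ v) u| ^ 2 ≤ 4 * A ^ 2 * (ρ * M ^ 4) := by
    calc _ ≤ 1 / ρ * (ρ * (2 * (A * M ^ 2))) ^ 2 := by
          gcongr
          exact abs_deriv_entropy_le hγ hγ3 (hψ.of_le (by norm_num)) hρ.le
            (hgrowth hψ'_bound (by linarith) (by push_cast; linarith))
      _ = 4 * A ^ 2 * (ρ * M ^ 4) := by field_simp; ring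
  calc _ ≤ (4 * A + 4 * A ^ 2) * (ρ * M ^ 4) := by linarith
    _ ≤ _ := by rw [mul_assoc]; exact mul_le_mul_of_nonneg_left (hdom ρ hρ u) (by positivity)

/-- For `1 < γ ≤ 3` and a convex `ψ ∈ C²(ℝ)` with `|ψ(s)| ≤ A|s|^{3−δ}` and
`|ψ′(s)| ≤ A|s|^{2−δ}` for some `0 ≤ δ ≤ 2`, there is `C > 0` with
`|η^ψ| + |q^ψ| + (1/ρ)|∂_u η^ψ|² ≤ C(1 + ρ|u|⁴ + g(ρ) + ρP(ρ))` for all `ρ > 0`, `u ∈ ℝ`. -/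
theorem entropy_subcubic_growth_bounds (γ : ℝ) (hγ : 1 < γ) (hγ3 : γ ≤ 3)
    (ψ : ℝ → ℝ) (hψ : ContDiff ℝ 2 ψ) (hconv : ConvexOn ℝ Set.univ ψ)
    (A δ : ℝ) (hA : 0 < A) (hδ0 : 0 ≤ δ) (hδ2 : δ ≤ 2)
    (hψ_bound : ∀ s : ℝ, |ψ s| ≤ A * |s| ^ (3 - δ))
    (hψ'_bound : ∀ s : ℝ, |deriv ψ s| ≤ A * |s| ^ (2 - δ)) :
    ∃ C : ℝ, 0 < C ∧ ∀ ρ : ℝ, 0 < ρ → ∀ u : ℝ,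
      |entropy γ ψ ρ u| + |entropyFlux γ ψ ρ u| +
          (1 / ρ) * |deriv (fun v => entropy γ ψ ρ v) u| ^ 2 ≤
        C * (1 + ρ * |u| ^ 4 + gFun γ ρ + ρ * pressure γ ρ) :=
  entropy_subcubic_growth_bounds_general γ hγ hγ3 ψ hψ A δ hA hδ0 hδ2 hψ_bound hψ'_bound
end
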